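/- Let ≺₂ be the position-over-term extension of ≺₁, and let G be a finite set of labeled polynomials of I equipped with a strict total order < (p < q read 'p was added to G later than q'). Suppose: (1) f_i^[e_i] ∈ G for i = 1,…,m, and every element of G ∖ {f₁^[e₁],…,f_m^[e_m]} was added later than each f_i^[e_i]; and (2) every critical pair of G is F5-divisible or F5-rewritable by G. Then G is a full-labeled Gröbner basis for I. -/

import Mathlib

open MvPolynomial

noncomputable section

/-- Power products of `K[x₁,…,xₙ]`, recorded by their exponent vectors
(so `x^α ∣ x^β` is `α ≤ β` and `x^α · x^β` is `α + β`). -/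
abbrev PP (n : ℕ) := Fin n →₀ ℕ

/-- Module terms `x^α • eᵢ` of the free module `R^m`. -/
abbrev MTerm (n m : ℕ) := PP n × Fin m

/-- Multiplication of a module term by a power product. -/
def mtmul {n m : ℕ} (γ : PP n) (t : MTerm n m) : MTerm n m := (γ + t.1, t.2)

/-- A monomial order `≺₁` on the power products of `K[x₁,…,xₙ]`. -/
structure MonOrd (n : ℕ) where
  ord : LinearOrder (PP n)
  mul_lt : ∀ γ a b : PP n, ord.lt a b → ord.lt (γ + a) (γ + b)
  one_le : ∀ a : PP n, ord.le 0 a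
  wf : WellFounded ord.lt

/-- A term order `≺₂` on the module terms of `R^m`: a well-order compatible with
multiplication by power products. -/
structure ModOrd (n m : ℕ) where
  ord : LinearOrder (MTerm n m)
  mul_lt : ∀ (γ : PP n) (a b : MTerm n m), ord.lt a b → ord.lt (mtmul γ a) (mtmul γ b)
  wf : WellFounded ord.lt

variable {K : Type*} [Field K] {n m : ℕ}

/-- Elements of the free module `R^m`. -/
abbrev ModElem (K : Type*) [Field K] (n m : ℕ) := Fin m → MvPolynomial (Fin n) K

/-- `u · F = u₁f₁ + … + u_m f_m`. -/
def dotF (u : ModElem K n m) (F : Fin m → MvPolynomial (Fin n) K) : MvPolynomial (Fin n) K :=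
  ∑ i, u i * F i

/-- Leading power product of a polynomial, valued in `WithBot` so that `lppW 0 = ⊥`
(the convention `lpp 0 = 0 ≺ t` for all terms `t`). -/
def lppW (o : MonOrd n) (f : MvPolynomial (Fin n) K) : WithBot (PP n) :=
  @Finset.max (PP n) o.ord f.support

/-- Leading power product of a (nonzero) polynomial. -/
def lpp (o : MonOrd n) (f : MvPolynomial (Fin n) K) : PP n :=
  WithBot.unbotD 0 (lppW o f)

/-- Leading coefficient of a polynomial (`lc 0 = 0`). -/
def lc (o : MonOrd n) (f : MvPolynomial (Fin n) K) : K := f.coeff (lpp o f)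

/-- The set of module terms occurring in a module element. -/
def msupport (u : ModElem K n m) : Finset (MTerm n m) :=
  Finset.univ.biUnion fun i => (u i).support.image fun α => (α, i)

/-- Leading module term (signature) of a module element, `⊥` for the zero element. -/
def lppMW (o : ModOrd n m) (u : ModElem K n m) : WithBot (MTerm n m) :=
  @Finset.max (MTerm n m) o.ord (msupport u)

/-- Coefficient of a module element at a module term. -/
def mcoeff (u : ModElem K n m) (t : MTerm n m) : K := (u t.2).coeff t.1

/-- Leading coefficient of a module element (`0` for the zero element). -/
def lcM (o : ModOrd n m) (u : ModElem K n m) : K :=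
  WithBot.recBotCoe 0 (fun t => mcoeff u t) (lppMW o u)

/-- `⪯` on `WithBot`-valued leading power products w.r.t. `≺₁`. -/
def wbleP (o : MonOrd n) (a b : WithBot (PP n)) : Prop :=
  @LE.le (WithBot (PP n)) (@WithBot.instLE (PP n) o.ord.toLE) a b
/-- `≺` on `WithBot`-valued leading power products w.r.t. `≺₁`. -/
def wbltP (o : MonOrd n) (a b : WithBot (PP n)) : Prop :=
  @LT.lt (WithBot (PP n)) (@WithBot.instLT (PP n) o.ord.toLT) a b
/-- `⪯` on `WithBot`-valued signatures w.r.t. `≺₂`. -/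
def wbleM (o : ModOrd n m) (a b : WithBot (MTerm n m)) : Prop :=
  @LE.le (WithBot (MTerm n m)) (@WithBot.instLE (MTerm n m) o.ord.toLE) a b
/-- `≺` on `WithBot`-valued signatures w.r.t. `≺₂`. -/
def wbltM (o : ModOrd n m) (a b : WithBot (MTerm n m)) : Prop :=
  @LT.lt (WithBot (MTerm n m)) (@WithBot.instLT (MTerm n m) o.ord.toLT) a b

/-- Multiplication of a module element by a power product `x^t`. -/
def smulPP (t : PP n) (u : ModElem K n m) : ModElem K n m := fun k => monomial t (1 : K) * u k

/-- Multiplication of a module element by a polynomial. -/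
def pmul (p : MvPolynomial (Fin n) K) (u : ModElem K n m) : ModElem K n m := fun k => p * u k

/-- The `j`-th standard basis vector `e_j` of `R^m`. -/
def eVec (j : Fin m) : ModElem K n m := fun k => if k = j then 1 else 0

/-- The module element `c · x^α · e_j`. -/
def termVec (α : PP n) (c : K) (j : Fin m) : ModElem K n m :=
  fun k => if k = j then monomial α c else 0

/-- `G = {g₁^[v₁], …, g_s^[v_s]}` is a full-labeled Gröbner basis for `I = ⟨F⟩`:
each `gᵢ = vᵢ · F`, and for every labeled polynomial `f^[u]` of `I` with `f ≠ 0`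
there is `i` with `lpp(gᵢ) ∣ lpp(f)` and `lpp(t·vᵢ) ⪯ lpp(u)`, `t = lpp(f)/lpp(gᵢ)`. -/
def IsFullLGB (o1 : MonOrd n) (o2 : ModOrd n m) (F : Fin m → MvPolynomial (Fin n) K)
    {s : ℕ} (g : Fin s → MvPolynomial (Fin n) K) (v : Fin s → ModElem K n m) : Prop :=
  (∀ i, g i = dotF (v i) F) ∧
  ∀ (f : MvPolynomial (Fin n) K) (u : ModElem K n m), f = dotF u F → f ≠ 0 →
    ∃ i, g i ≠ 0 ∧ lpp o1 (g i) ≤ lpp o1 f ∧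
      wbleM o2 (lppMW o2 (smulPP (lpp o1 f - lpp o1 (g i)) (v i))) (lppMW o2 u)

/-- `S = {g₁^(t₁), …, g_s^(t_s)}` is a signature-labeled Gröbner basis for `I = ⟨F⟩`. -/
def IsSigLGB (o1 : MonOrd n) (o2 : ModOrd n m) (F : Fin m → MvPolynomial (Fin n) K)
    {s : ℕ} (g : Fin s → MvPolynomial (Fin n) K) (t : Fin s → MTerm n m) : Prop :=
  ∃ v : Fin s → ModElem K n m, (∀ i, lppMW o2 (v i) = (t i : WithBot (MTerm n m))) ∧
    IsFullLGB o1 o2 F g v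

/-- `g^[v]` is a standard form of the module term `T` in `I = ⟨F⟩`. -/
def IsStdForm (o1 : MonOrd n) (o2 : ModOrd n m) (F : Fin m → MvPolynomial (Fin n) K)
    (T : MTerm n m) (g : MvPolynomial (Fin n) K) (v : ModElem K n m) : Prop :=
  g = dotF v F ∧ lppMW o2 v = (T : WithBot (MTerm n m)) ∧
  ∀ (f : MvPolynomial (Fin n) K) (u : ModElem K n m), f = dotF u F →
    lppMW o2 u = (T : WithBot (MTerm n m)) → wbleP o1 (lppW o1 g) (lppW o1 f)

/-- `≺₂` is the position-over-term extension of `≺₁`: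
`x^α eᵢ ≺₂ x^β e_j` iff `i > j`, or `i = j` and `x^α ≺₁ x^β`. -/
def IsPOT (o1 : MonOrd n) (o2 : ModOrd n m) : Prop :=
  ∀ a b : MTerm n m, o2.ord.lt a b ↔ (b.2 < a.2 ∨ (a.2 = b.2 ∧ o1.ord.lt a.1 b.1))

/-- `f^(T)` is an admissible labeled polynomial: some `u` satisfies `f = u·F`, `lpp(u) = T`. -/
def Admissible (o2 : ModOrd n m) (F : Fin m → MvPolynomial (Fin n) K)
    (f : MvPolynomial (Fin n) K) (T : MTerm n m) : Prop :=
  ∃ u : ModElem K n m, f = dotF u F ∧ lppMW o2 u = (T : WithBot (MTerm n m))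

/-- `r` is a strict total order on the set `B` (`r p q` read: `p` was added later than `q`). -/
def StrictTotalOn {X : Type*} (B : Set X) (r : X → X → Prop) : Prop :=
  (∀ p ∈ B, ¬ r p p) ∧
  (∀ p ∈ B, ∀ q ∈ B, ∀ w ∈ B, r p q → r q w → r p w) ∧
  (∀ p ∈ B, ∀ q ∈ B, p ≠ q → r p q ∨ r q p)

/-- `tf o1 f g = lcm(lpp f, lpp g) / lpp f`. -/
def tf (o1 : MonOrd n) (f g : MvPolynomial (Fin n) K) : PP n :=
  (lpp o1 f ⊔ lpp o1 g) - lpp o1 f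

/-- `f^[u]` has a standard representation w.r.t. the set `B` of labeled polynomials. -/
def HasStdRep (o1 : MonOrd n) (o2 : ModOrd n m)
    (B : Set (MvPolynomial (Fin n) K × ModElem K n m))
    (f : MvPolynomial (Fin n) K) (u : ModElem K n m) : Prop :=
  ∃ (s : ℕ) (p : Fin s → MvPolynomial (Fin n) K)
      (q : Fin s → MvPolynomial (Fin n) K × ModElem K n m),
    (∀ i, q i ∈ B) ∧ f = ∑ i, p i * (q i).1 ∧
    (∀ i, wbleP o1 (lppW o1 (p i * (q i).1)) (lppW o1 f)) ∧
    (∀ i, wbleM o2 (lppMW o2 (pmul (p i) ((q i).2))) (lppMW o2 u))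

/-- `(t_p, p, t_q, q)` is a critical pair of labeled polynomials. -/
def IsCritPairL (o1 : MonOrd n) (o2 : ModOrd n m)
    (later : (MvPolynomial (Fin n) K × ModElem K n m) →
      (MvPolynomial (Fin n) K × ModElem K n m) → Prop)
    (p q : MvPolynomial (Fin n) K × ModElem K n m) : Prop :=
  p.1 ≠ 0 ∧ q.1 ≠ 0 ∧
  (wbltM o2 (lppMW o2 (smulPP (tf o1 q.1 p.1) q.2)) (lppMW o2 (smulPP (tf o1 p.1 q.1) p.2)) ∨
   (lppMW o2 (smulPP (tf o1 p.1 q.1) p.2) = lppMW o2 (smulPP (tf o1 q.1 p.1) q.2) ∧ later q p))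

/-- Polynomial part of the S-polynomial of a critical pair of labeled polynomials. -/
def sPolyF (o1 : MonOrd n) (p q : MvPolynomial (Fin n) K × ModElem K n m) :
    MvPolynomial (Fin n) K :=
  monomial (tf o1 p.1 q.1) (1 : K) * p.1 -
    monomial (tf o1 q.1 p.1) (lc o1 p.1 / lc o1 q.1) * q.1

/-- Label part of the S-polynomial of a critical pair of labeled polynomials. -/
def sPolyU (o1 : MonOrd n) (p q : MvPolynomial (Fin n) K × ModElem K n m) : ModElem K n m :=
  fun k => monomial (tf o1 p.1 q.1) (1 : K) * p.2 k -
    monomial (tf o1 q.1 p.1) (lc o1 p.1 / lc o1 q.1) * q.2 k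

/-- `t·p` (labeled version) is F5-divisible by `B`. -/
def F5DivL (o1 : MonOrd n) (o2 : ModOrd n m)
    (B : Set (MvPolynomial (Fin n) K × ModElem K n m)) (t : PP n)
    (p : MvPolynomial (Fin n) K × ModElem K n m) : Prop :=
  ∃ (α : PP n) (i : Fin m), lppMW o2 p.2 = (((α, i) : MTerm n m) : WithBot (MTerm n m)) ∧
    ∃ q ∈ B, q.1 ≠ 0 ∧ ∃ (β : PP n) (j : Fin m),
      lppMW o2 q.2 = (((β, j) : MTerm n m) : WithBot (MTerm n m)) ∧
      lpp o1 q.1 ≤ t + α ∧ o2.ord.lt (((0 : PP n), j) : MTerm n m) (((0 : PP n), i) : MTerm n m)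

/-- `t·p` (labeled version) is F5-rewritable by `B`. -/
def F5RewL (o2 : ModOrd n m)
    (later : (MvPolynomial (Fin n) K × ModElem K n m) →
      (MvPolynomial (Fin n) K × ModElem K n m) → Prop)
    (B : Set (MvPolynomial (Fin n) K × ModElem K n m)) (t : PP n)
    (p : MvPolynomial (Fin n) K × ModElem K n m) : Prop :=
  ∃ q ∈ B, (∃ a b : MTerm n m, lppMW o2 q.2 = (a : WithBot (MTerm n m)) ∧
    lppMW o2 (smulPP t p.2) = (b : WithBot (MTerm n m)) ∧ a.2 = b.2 ∧ a.1 ≤ b.1) ∧ later q p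

/-- A set `G` of labeled polynomials is a full-labeled Gröbner basis for `I = ⟨F⟩`. -/
def IsFullLGBSet (o1 : MonOrd n) (o2 : ModOrd n m) (F : Fin m → MvPolynomial (Fin n) K)
    (G : Set (MvPolynomial (Fin n) K × ModElem K n m)) : Prop :=
  (∀ p ∈ G, p.1 = dotF p.2 F) ∧
  ∀ (f : MvPolynomial (Fin n) K) (u : ModElem K n m), f = dotF u F → f ≠ 0 →
    ∃ p ∈ G, p.1 ≠ 0 ∧ lpp o1 p.1 ≤ lpp o1 f ∧
      wbleM o2 (lppMW o2 (smulPP (lpp o1 f - lpp o1 p.1) p.2)) (lppMW o2 u)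

/-- `t·p` (signature version, `p = f^(x^α eᵢ)`) is F5-divisible by `B`. -/
def F5DivS (o1 : MonOrd n) (o2 : ModOrd n m)
    (B : Set (MvPolynomial (Fin n) K × MTerm n m)) (t : PP n)
    (p : MvPolynomial (Fin n) K × MTerm n m) : Prop :=
  ∃ q ∈ B, q.1 ≠ 0 ∧ lpp o1 q.1 ≤ t + p.2.1 ∧
    o2.ord.lt (((0 : PP n), q.2.2) : MTerm n m) (((0 : PP n), p.2.2) : MTerm n m)

/-- `t·p` (signature version) is F5-rewritable by `B`. -/
def F5RewS
    (later : (MvPolynomial (Fin n) K × MTerm n m) →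
      (MvPolynomial (Fin n) K × MTerm n m) → Prop)
    (B : Set (MvPolynomial (Fin n) K × MTerm n m)) (t : PP n)
    (p : MvPolynomial (Fin n) K × MTerm n m) : Prop :=
  ∃ q ∈ B, q.2.2 = p.2.2 ∧ q.2.1 ≤ t + p.2.1 ∧ later q p

/-- `(t_p, p, t_q, q)` is a critical pair (signature version). -/
def IsCritPairS (o1 : MonOrd n) (o2 : ModOrd n m)
    (later : (MvPolynomial (Fin n) K × MTerm n m) →
      (MvPolynomial (Fin n) K × MTerm n m) → Prop)
    (p q : MvPolynomial (Fin n) K × MTerm n m) : Prop :=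
  p.1 ≠ 0 ∧ q.1 ≠ 0 ∧
  (o2.ord.lt (mtmul (tf o1 q.1 p.1) q.2) (mtmul (tf o1 p.1 q.1) p.2) ∨
   (mtmul (tf o1 p.1 q.1) p.2 = mtmul (tf o1 q.1 p.1) q.2 ∧ later q p))

/-- A finite set `S` of pairs `(g, t)` is a signature-labeled Gröbner basis for `I = ⟨F⟩`. -/
def IsSigLGBSet (o1 : MonOrd n) (o2 : ModOrd n m) (F : Fin m → MvPolynomial (Fin n) K)
    (S : Set (MvPolynomial (Fin n) K × MTerm n m)) : Prop :=
  S.Finite ∧ ∃ V : MvPolynomial (Fin n) K × MTerm n m → ModElem K n m,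
    (∀ p ∈ S, lppMW o2 (V p) = (p.2 : WithBot (MTerm n m))) ∧
    IsFullLGBSet o1 o2 F ((fun p => (p.1, V p)) '' S)

end

section Aux0
variable {K : Type*} [Field K] {n m : ℕ}

/-! ### Order wrapper lemmas -/

theorem wbleP_coe (o1 : MonOrd n) {a b : PP n} :
    wbleP o1 (a : WithBot (PP n)) (b : WithBot (PP n)) ↔ o1.ord.le a b :=
  @WithBot.coe_le_coe (PP n) a b o1.ord.toLE

theorem wbltP_coe (o1 : MonOrd n) {a b : PP n} :
    wbltP o1 (a : WithBot (PP n)) (b : WithBot (PP n)) ↔ o1.ord.lt a b :=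
  @WithBot.coe_lt_coe (PP n) a b o1.ord.toLT

theorem wbltP_bot (o1 : MonOrd n) (a : PP n) : wbltP o1 ⊥ (a : WithBot (PP n)) :=
  @WithBot.bot_lt_coe (PP n) o1.ord.toLT a

theorem wbleP_bot_iff (o1 : MonOrd n) {x : WithBot (PP n)} : wbleP o1 x ⊥ ↔ x = ⊥ :=
  @WithBot.le_bot_iff (PP n) o1.ord.toLE x

theorem wbleP_refl (o1 : MonOrd n) (x : WithBot (PP n)) : wbleP o1 x x :=
  @le_refl _ (@WithBot.instPreorder _ o1.ord.toPreorder) x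

theorem wbleP_trans (o1 : MonOrd n) {x y z : WithBot (PP n)}
    (h1 : wbleP o1 x y) (h2 : wbleP o1 y z) : wbleP o1 x z :=
  @le_trans _ (@WithBot.instPreorder _ o1.ord.toPreorder) x y z h1 h2

theorem wbleP_of_lt (o1 : MonOrd n) {x y : WithBot (PP n)}
    (h : wbltP o1 x y) : wbleP o1 x y :=
  @le_of_lt _ (@WithBot.instPreorder _ o1.ord.toPreorder) x y h

theorem not_wbltP (o1 : MonOrd n) {x y : WithBot (PP n)} :
    ¬ wbltP o1 x y ↔ wbleP o1 y x :=
  @not_lt _ (@WithBot.linearOrder _ o1.ord) x y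

theorem wbltP_of_le_of_lt (o1 : MonOrd n) {x y z : WithBot (PP n)}
    (h1 : wbleP o1 x y) (h2 : wbltP o1 y z) : wbltP o1 x z :=
  @lt_of_le_of_lt _ (@WithBot.instPreorder _ o1.ord.toPreorder) x y z h1 h2

theorem wbltP_of_lt_of_le (o1 : MonOrd n) {x y z : WithBot (PP n)}
    (h1 : wbltP o1 x y) (h2 : wbleP o1 y z) : wbltP o1 x z :=
  @lt_of_lt_of_le _ (@WithBot.instPreorder _ o1.ord.toPreorder) x y z h1 h2

theorem wbleM_coe (o2 : ModOrd n m) {a b : MTerm n m} :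
    wbleM o2 (a : WithBot (MTerm n m)) (b : WithBot (MTerm n m)) ↔ o2.ord.le a b :=
  @WithBot.coe_le_coe (MTerm n m) a b o2.ord.toLE

theorem wbltM_coe (o2 : ModOrd n m) {a b : MTerm n m} :
    wbltM o2 (a : WithBot (MTerm n m)) (b : WithBot (MTerm n m)) ↔ o2.ord.lt a b :=
  @WithBot.coe_lt_coe (MTerm n m) a b o2.ord.toLT

theorem wbltM_bot (o2 : ModOrd n m) (a : MTerm n m) : wbltM o2 ⊥ (a : WithBot (MTerm n m)) :=
  @WithBot.bot_lt_coe (MTerm n m) o2.ord.toLT a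

theorem wbleM_bot_iff (o2 : ModOrd n m) {x : WithBot (MTerm n m)} : wbleM o2 x ⊥ ↔ x = ⊥ :=
  @WithBot.le_bot_iff (MTerm n m) o2.ord.toLE x

theorem wbleM_refl (o2 : ModOrd n m) (x : WithBot (MTerm n m)) : wbleM o2 x x :=
  @le_refl _ (@WithBot.instPreorder _ o2.ord.toPreorder) x

theorem wbleM_trans (o2 : ModOrd n m) {x y z : WithBot (MTerm n m)}
    (h1 : wbleM o2 x y) (h2 : wbleM o2 y z) : wbleM o2 x z :=
  @le_trans _ (@WithBot.instPreorder _ o2.ord.toPreorder) x y z h1 h2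

theorem wbleM_of_lt (o2 : ModOrd n m) {x y : WithBot (MTerm n m)}
    (h : wbltM o2 x y) : wbleM o2 x y :=
  @le_of_lt _ (@WithBot.instPreorder _ o2.ord.toPreorder) x y h

theorem not_wbltM (o2 : ModOrd n m) {x y : WithBot (MTerm n m)} :
    ¬ wbltM o2 x y ↔ wbleM o2 y x :=
  @not_lt _ (@WithBot.linearOrder _ o2.ord) x y

theorem wbltM_of_le_of_lt (o2 : ModOrd n m) {x y z : WithBot (MTerm n m)}
    (h1 : wbleM o2 x y) (h2 : wbltM o2 y z) : wbltM o2 x z :=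
  @lt_of_le_of_lt _ (@WithBot.instPreorder _ o2.ord.toPreorder) x y z h1 h2

theorem wbltM_of_lt_of_le (o2 : ModOrd n m) {x y z : WithBot (MTerm n m)}
    (h1 : wbltM o2 x y) (h2 : wbleM o2 y z) : wbltM o2 x z :=
  @lt_of_lt_of_le _ (@WithBot.instPreorder _ o2.ord.toPreorder) x y z h1 h2

theorem wbltM_trans (o2 : ModOrd n m) {x y z : WithBot (MTerm n m)}
    (h1 : wbltM o2 x y) (h2 : wbltM o2 y z) : wbltM o2 x z :=
  @lt_trans _ (@WithBot.instPreorder _ o2.ord.toPreorder) x y z h1 h2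

/-- Well-foundedness of `≺` on `WithBot (PP n)`. -/
theorem wbltP_wf (o1 : MonOrd n) : WellFounded (wbltP o1) := by
  have hwf : @WellFoundedLT (PP n) o1.ord.toLT := ⟨by exact o1.wf⟩
  exact (@WithBot.instWellFoundedLT (PP n) o1.ord.toLT hwf).wf

theorem o1_le_of_le (o1 : MonOrd n) {a b : PP n} (h : a ≤ b) : o1.ord.le a b := by
  rcases eq_or_ne (b - a) 0 with h0 | h0
  · have : b = a := le_antisymm (tsub_eq_zero_iff_le.1 h0) h
    rw [this]; exact @le_refl _ o1.ord.toPreorder a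
  · have h1 : o1.ord.lt 0 (b - a) := by
      rcases @lt_or_eq_of_le _ o1.ord.toPartialOrder _ _ (o1.one_le (b - a)) with h2 | h2
      · exact h2
      · exact absurd h2.symm h0
    have h2 := o1.mul_lt a _ _ h1
    rw [add_zero, add_tsub_cancel_of_le h] at h2
    exact @le_of_lt _ o1.ord.toPreorder _ _ h2
end Aux0
section Aux1
variable {K : Type*} [Field K] {n m : ℕ}

theorem lppW_eq_bot_iff (o1 : MonOrd n) (f : MvPolynomial (Fin n) K) :
    lppW o1 f = ⊥ ↔ f = 0 := by
  rw [lppW, @Finset.max_eq_bot _ o1.ord, MvPolynomial.support_eq_empty]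

theorem lppW_eq_coe (o1 : MonOrd n) {f : MvPolynomial (Fin n) K} (hf : f ≠ 0) :
    lppW o1 f = ((lpp o1 f : PP n) : WithBot (PP n)) := by
  obtain ⟨a, ha⟩ := @Finset.max_of_nonempty _ o1.ord _ (MvPolynomial.support_nonempty.2 hf)
  have h2 : lppW o1 f = a := ha
  rw [h2, lpp, h2]
  rfl

theorem lpp_mem_support (o1 : MonOrd n) {f : MvPolynomial (Fin n) K} (hf : f ≠ 0) :
    lpp o1 f ∈ f.support :=
  @Finset.mem_of_max _ o1.ord _ _ (lppW_eq_coe o1 hf)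

theorem lc_ne_zero (o1 : MonOrd n) {f : MvPolynomial (Fin n) K} (hf : f ≠ 0) :
    MvPolynomial.coeff (lpp o1 f) f ≠ 0 :=
  MvPolynomial.mem_support_iff.1 (lpp_mem_support o1 hf)

theorem le_lppW (o1 : MonOrd n) {f : MvPolynomial (Fin n) K} {b : PP n}
    (hb : b ∈ f.support) : wbleP o1 (b : WithBot (PP n)) (lppW o1 f) :=
  @Finset.le_max _ o1.ord _ _ hb

theorem le_lpp (o1 : MonOrd n) {f : MvPolynomial (Fin n) K} {b : PP n}
    (hb : b ∈ f.support) : o1.ord.le b (lpp o1 f) := by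
  have h1 := le_lppW o1 hb
  have hf : f ≠ 0 := by rintro rfl; simp at hb
  rw [lppW_eq_coe o1 hf] at h1
  exact (wbleP_coe o1).1 h1

theorem lppW_eq_of (o1 : MonOrd n) {f : MvPolynomial (Fin n) K} {a : PP n}
    (ha : a ∈ f.support) (hub : ∀ b ∈ f.support, o1.ord.le b a) :
    lppW o1 f = (a : WithBot (PP n)) := by
  have h1 : wbleP o1 (lppW o1 f) (a : WithBot (PP n)) :=
    @Finset.max_le _ o1.ord _ _ (fun b hb => (wbleP_coe o1).2 (hub b hb))
  have h2 : wbleP o1 (a : WithBot (PP n)) (lppW o1 f) := le_lppW o1 ha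
  exact @le_antisymm _ (@WithBot.instPartialOrder _ o1.ord.toPartialOrder) _ _ h1 h2

theorem lppW_lt_of (o1 : MonOrd n) {f : MvPolynomial (Fin n) K} {a : PP n}
    (h : ∀ b ∈ f.support, o1.ord.lt b a) :
    wbltP o1 (lppW o1 f) (a : WithBot (PP n)) := by
  by_cases hf : f = 0
  · rw [show lppW o1 f = ⊥ from (lppW_eq_bot_iff o1 f).2 hf]
    exact wbltP_bot o1 a
  · rw [lppW_eq_coe o1 hf]
    exact (wbltP_coe o1).2 (h _ (lpp_mem_support o1 hf))

theorem coeff_eq_zero_of_lppW_lt (o1 : MonOrd n) {f : MvPolynomial (Fin n) K} {a : PP n}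
    (h : wbltP o1 (lppW o1 f) (a : WithBot (PP n))) : MvPolynomial.coeff a f = 0 := by
  by_contra hc
  have h2 := le_lppW o1 (f := f) (b := a) (MvPolynomial.mem_support_iff.2 hc)
  exact (not_wbltP o1).2 h2 h

theorem lppW_monomial_mul (o1 : MonOrd n) {f : MvPolynomial (Fin n) K} (hf : f ≠ 0)
    (t : PP n) {c : K} (hc : c ≠ 0) :
    lppW o1 (MvPolynomial.monomial t c * f) = ((t + lpp o1 f : PP n) : WithBot (PP n)) := by
  apply lppW_eq_of
  · rw [MvPolynomial.mem_support_iff, MvPolynomial.coeff_monomial_mul' (t + lpp o1 f) t c f,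
      if_pos le_self_add, add_tsub_cancel_left]
    exact mul_ne_zero hc (lc_ne_zero o1 hf)
  · intro b hb
    rw [MvPolynomial.mem_support_iff, MvPolynomial.coeff_monomial_mul' b t c f] at hb
    by_cases hle : t ≤ b
    · rw [if_pos hle] at hb
      have hmem : b - t ∈ f.support := by
        rw [MvPolynomial.mem_support_iff]
        intro h0; rw [h0, mul_zero] at hb; exact hb rfl
      have h1 : o1.ord.le (b - t) (lpp o1 f) := le_lpp o1 hmem
      have h2 : o1.ord.le (t + (b - t)) (t + lpp o1 f) := by
        rcases @eq_or_lt_of_le _ o1.ord.toPartialOrder _ _ h1 with h | h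
        · rw [h]; exact @le_refl _ o1.ord.toPreorder _
        · exact @le_of_lt _ o1.ord.toPreorder _ _ (o1.mul_lt t _ _ h)
      rwa [add_tsub_cancel_of_le hle] at h2
    · rw [if_neg hle] at hb; exact absurd rfl hb

theorem monomial_mul_ne_zero {f : MvPolynomial (Fin n) K} (hf : f ≠ 0)
    (t : PP n) {c : K} (hc : c ≠ 0) : MvPolynomial.monomial t c * f ≠ 0 :=
  mul_ne_zero (by simp [MvPolynomial.monomial_eq_zero, hc]) hf

theorem lpp_monomial_mul (o1 : MonOrd n) {f : MvPolynomial (Fin n) K} (hf : f ≠ 0)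
    (t : PP n) {c : K} (hc : c ≠ 0) :
    lpp o1 (MvPolynomial.monomial t c * f) = t + lpp o1 f := by
  have h := lppW_eq_coe o1 (monomial_mul_ne_zero hf t hc)
  rw [lppW_monomial_mul o1 hf t hc] at h
  exact WithBot.coe_inj.1 h.symm

theorem coeff_monomial_mul_top (o1 : MonOrd n) {f : MvPolynomial (Fin n) K}
    (t : PP n) (c : K) :
    MvPolynomial.coeff (t + lpp o1 f) (MvPolynomial.monomial t c * f)
      = c * MvPolynomial.coeff (lpp o1 f) f := by
  rw [MvPolynomial.coeff_monomial_mul' (t + lpp o1 f) t c f, if_pos le_self_add,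
    add_tsub_cancel_left]

/-- Dominance: if `lppW g ≺ lppW f` then `lppW (f - g) = lppW f`. -/
theorem lppW_sub_dominant (o1 : MonOrd n) {f g : MvPolynomial (Fin n) K}
    (h : wbltP o1 (lppW o1 g) (lppW o1 f)) :
    lppW o1 (f - g) = lppW o1 f := by
  have hf : f ≠ 0 := by
    rintro rfl
    rw [(lppW_eq_bot_iff o1 0).2 rfl] at h
    rcases (@WithBot.lt_iff_exists_coe _ o1.ord.toLT _ _).1 h with ⟨p, hp, _⟩
    exact (@WithBot.not_lt_bot _ o1.ord.toLT _) h
  rw [lppW_eq_coe o1 hf] at h ⊢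
  apply lppW_eq_of
  · rw [MvPolynomial.mem_support_iff, MvPolynomial.coeff_sub,
      coeff_eq_zero_of_lppW_lt o1 h, sub_zero]
    exact lc_ne_zero o1 hf
  · intro b hb
    rw [MvPolynomial.mem_support_iff, MvPolynomial.coeff_sub] at hb
    rcases eq_or_ne (MvPolynomial.coeff b f) 0 with h0 | h0
    · rw [h0, zero_sub, neg_ne_zero] at hb
      have := le_lppW o1 (MvPolynomial.mem_support_iff.2 hb)
      have h2 : wbltP o1 (b : WithBot (PP n)) ((lpp o1 f : PP n) : WithBot (PP n)) :=
        wbltP_of_le_of_lt o1 this h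
      exact @le_of_lt _ o1.ord.toPreorder _ _ ((wbltP_coe o1).1 h2)
    · exact le_lpp o1 (MvPolynomial.mem_support_iff.2 h0)

/-- Cancellation: if `f`,`g` have the same `lppW` and the same leading coefficient,
then `lppW (f - g) ≺ lppW f`. -/
theorem lppW_sub_cancel (o1 : MonOrd n) {f g : MvPolynomial (Fin n) K} (hf : f ≠ 0)
    (hl : lppW o1 g = lppW o1 f)
    (hc : MvPolynomial.coeff (lpp o1 f) g = MvPolynomial.coeff (lpp o1 f) f) :
    wbltP o1 (lppW o1 (f - g)) (lppW o1 f) := by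
  rw [lppW_eq_coe o1 hf]
  apply lppW_lt_of
  intro b hb
  rw [MvPolynomial.mem_support_iff, MvPolynomial.coeff_sub] at hb
  have hble : o1.ord.le b (lpp o1 f) := by
    rcases eq_or_ne (MvPolynomial.coeff b f) 0 with h0 | h0
    · rw [h0, zero_sub, neg_ne_zero] at hb
      have h1 := le_lppW o1 (MvPolynomial.mem_support_iff.2 hb)
      rw [hl, lppW_eq_coe o1 hf] at h1
      exact (wbleP_coe o1).1 h1
    · exact le_lpp o1 (MvPolynomial.mem_support_iff.2 h0)
  have hbne : b ≠ lpp o1 f := by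
    rintro rfl
    rw [hc, sub_self] at hb
    exact hb rfl
  exact @lt_of_le_of_ne _ o1.ord.toPartialOrder _ _ hble hbne

end Aux1
section Aux2
variable {K : Type*} [Field K] {n m : ℕ}

theorem mem_msupport {u : ModElem K n m} {a : MTerm n m} :
    a ∈ msupport u ↔ mcoeff u a ≠ 0 := by
  obtain ⟨α, i⟩ := a
  constructor
  · intro h
    rcases Finset.mem_biUnion.1 h with ⟨j, -, hj⟩
    rcases Finset.mem_image.1 hj with ⟨β, hβ, hba⟩
    obtain ⟨h1, h2⟩ := Prod.mk.injEq .. ▸ hba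
    subst h1; subst h2
    exact MvPolynomial.mem_support_iff.1 hβ
  · intro h
    exact Finset.mem_biUnion.2 ⟨i, Finset.mem_univ i,
      Finset.mem_image.2 ⟨α, MvPolynomial.mem_support_iff.2 h, rfl⟩⟩

theorem msupport_eq_empty {u : ModElem K n m} : msupport u = ∅ ↔ u = 0 := by
  constructor
  · intro h
    funext k
    show u k = 0
    ext β
    rw [MvPolynomial.coeff_zero]
    by_contra hc
    have : ((β, k) : MTerm n m) ∈ msupport u := mem_msupport.2 hc
    rw [h] at this
    exact absurd this (Finset.notMem_empty _)
  · rintro rfl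
    rw [Finset.eq_empty_iff_forall_notMem]
    intro a ha
    exact mem_msupport.1 ha rfl

theorem lppMW_eq_bot_iff (o2 : ModOrd n m) (u : ModElem K n m) :
    lppMW o2 u = ⊥ ↔ u = 0 := by
  rw [lppMW, @Finset.max_eq_bot _ o2.ord, msupport_eq_empty]

theorem lppMW_exists_coe (o2 : ModOrd n m) {u : ModElem K n m} (hu : u ≠ 0) :
    ∃ a : MTerm n m, lppMW o2 u = (a : WithBot (MTerm n m)) := by
  have h : msupport u ≠ ∅ := fun h => hu (msupport_eq_empty.1 h)
  exact @Finset.max_of_nonempty _ o2.ord _ (Finset.nonempty_of_ne_empty h)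

theorem mem_of_lppMW (o2 : ModOrd n m) {u : ModElem K n m} {a : MTerm n m}
    (h : lppMW o2 u = (a : WithBot (MTerm n m))) : a ∈ msupport u :=
  @Finset.mem_of_max _ o2.ord _ _ h

theorem mcoeff_lppMW_ne_zero (o2 : ModOrd n m) {u : ModElem K n m} {a : MTerm n m}
    (h : lppMW o2 u = (a : WithBot (MTerm n m))) : mcoeff u a ≠ 0 :=
  mem_msupport.1 (mem_of_lppMW o2 h)

theorem le_lppMW (o2 : ModOrd n m) {u : ModElem K n m} {a : MTerm n m}
    (ha : a ∈ msupport u) : wbleM o2 (a : WithBot (MTerm n m)) (lppMW o2 u) :=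
  @Finset.le_max _ o2.ord _ _ ha

theorem lppMW_eq_of (o2 : ModOrd n m) {u : ModElem K n m} {a : MTerm n m}
    (ha : a ∈ msupport u) (hub : ∀ b ∈ msupport u, o2.ord.le b a) :
    lppMW o2 u = (a : WithBot (MTerm n m)) := by
  have h1 : wbleM o2 (lppMW o2 u) (a : WithBot (MTerm n m)) :=
    @Finset.max_le _ o2.ord _ _ (fun b hb => (wbleM_coe o2).2 (hub b hb))
  exact @le_antisymm _ (@WithBot.instPartialOrder _ o2.ord.toPartialOrder) _ _ h1 (le_lppMW o2 ha)

theorem lppMW_lt_of (o2 : ModOrd n m) {u : ModElem K n m} {a : MTerm n m}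
    (h : ∀ b ∈ msupport u, o2.ord.lt b a) :
    wbltM o2 (lppMW o2 u) (a : WithBot (MTerm n m)) := by
  by_cases hu : u = 0
  · rw [show lppMW o2 u = ⊥ from (lppMW_eq_bot_iff o2 u).2 hu]
    exact wbltM_bot o2 a
  · obtain ⟨b, hb⟩ := lppMW_exists_coe o2 hu
    rw [hb]
    exact (wbltM_coe o2).2 (h b (mem_of_lppMW o2 hb))

theorem le_lppMW_term (o2 : ModOrd n m) {u : ModElem K n m} {a b : MTerm n m}
    (h : lppMW o2 u = (a : WithBot (MTerm n m))) (hb : b ∈ msupport u) :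
    o2.ord.le b a := by
  have h1 := le_lppMW o2 hb
  rw [h] at h1
  exact (wbleM_coe o2).1 h1

/-! ### mtmul monotonicity -/

theorem mtmul_mtmul (s t : PP n) (a : MTerm n m) :
    mtmul s (mtmul t a) = mtmul (s + t) a := by
  simp [mtmul, add_assoc]

theorem mtmul_le_mono (o2 : ModOrd n m) {a b : MTerm n m} (t : PP n)
    (h : o2.ord.le a b) : o2.ord.le (mtmul t a) (mtmul t b) := by
  rcases @eq_or_lt_of_le _ o2.ord.toPartialOrder _ _ h with h1 | h1
  · rw [h1]; exact @le_refl _ o2.ord.toPreorder _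
  · exact @le_of_lt _ o2.ord.toPreorder _ _ (o2.mul_lt t _ _ h1)

theorem mtmul_lt_cancel (o2 : ModOrd n m) {a b : MTerm n m} {t : PP n}
    (h : o2.ord.lt (mtmul t a) (mtmul t b)) : o2.ord.lt a b := by
  rcases @lt_trichotomy _ o2.ord a b with h1 | h1 | h1
  · exact h1
  · rw [h1] at h; exact absurd h (@lt_irrefl _ o2.ord.toPreorder _)
  · exact absurd (o2.mul_lt t _ _ h1) (@lt_asymm _ o2.ord.toPreorder _ _ h)

/-! ### smulPP -/

theorem mcoeff_smulPP (t : PP n) (u : ModElem K n m) (a : MTerm n m) :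
    mcoeff (smulPP t u) (mtmul t a) = mcoeff u a := by
  show MvPolynomial.coeff (t + a.1) (MvPolynomial.monomial t (1 : K) * u a.2) = _
  rw [MvPolynomial.coeff_monomial_mul, one_mul]
  rfl

theorem msupport_smulPP {t : PP n} {u : ModElem K n m} {b : MTerm n m}
    (hb : b ∈ msupport (smulPP t u)) :
    ∃ a ∈ msupport u, b = mtmul t a := by
  have h := mem_msupport.1 hb
  have h2 : MvPolynomial.coeff b.1 (MvPolynomial.monomial t (1:K) * u b.2) ≠ 0 := h
  rw [MvPolynomial.coeff_monomial_mul'] at h2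
  by_cases hle : t ≤ b.1
  · rw [if_pos hle, one_mul] at h2
    refine ⟨(b.1 - t, b.2), mem_msupport.2 h2, ?_⟩
    show b = (t + (b.1 - t), b.2)
    rw [add_tsub_cancel_of_le hle]
  · rw [if_neg hle] at h2; exact absurd rfl h2

theorem lppMW_smulPP (o2 : ModOrd n m) {u : ModElem K n m} {a : MTerm n m} (t : PP n)
    (h : lppMW o2 u = (a : WithBot (MTerm n m))) :
    lppMW o2 (smulPP t u) = ((mtmul t a : MTerm n m) : WithBot (MTerm n m)) := by
  apply lppMW_eq_of
  · rw [mem_msupport, mcoeff_smulPP]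
    exact mcoeff_lppMW_ne_zero o2 h
  · intro b hb
    obtain ⟨c, hc, rfl⟩ := msupport_smulPP hb
    exact mtmul_le_mono o2 t (le_lppMW_term o2 h hc)

theorem smulPP_ne_zero {t : PP n} {u : ModElem K n m} (hu : u ≠ 0) :
    smulPP t u ≠ 0 := by
  intro h
  apply hu
  funext k
  have hk := congrFun h k
  show u k = 0
  by_contra hc
  exact monomial_mul_ne_zero hc t (one_ne_zero (α := K)) hk

/-! ### dotF algebra -/

theorem dotF_zero (F : Fin m → MvPolynomial (Fin n) K) : dotF (0 : ModElem K n m) F = 0 := by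
  simp [dotF]

theorem dotF_sub_C_mul (u w : ModElem K n m) (c : K) (F : Fin m → MvPolynomial (Fin n) K) :
    dotF (fun k => u k - MvPolynomial.C c * w k) F = dotF u F - MvPolynomial.C c * dotF w F := by
  rw [dotF, dotF, dotF, Finset.mul_sum, ← Finset.sum_sub_distrib]
  exact Finset.sum_congr rfl fun k _ => by ring

theorem dotF_smulPP (t : PP n) (u : ModElem K n m) (F : Fin m → MvPolynomial (Fin n) K) :
    dotF (smulPP t u) F = MvPolynomial.monomial t (1 : K) * dotF u F := by
  rw [dotF, dotF, Finset.mul_sum]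
  exact Finset.sum_congr rfl fun k _ => by rw [smulPP, mul_assoc]

theorem dotF_pmul (g : MvPolynomial (Fin n) K) (u : ModElem K n m)
    (F : Fin m → MvPolynomial (Fin n) K) :
    dotF (pmul g u) F = g * dotF u F := by
  rw [dotF, dotF, Finset.mul_sum]
  exact Finset.sum_congr rfl fun k _ => by rw [pmul, mul_assoc]

theorem dotF_sub (u w : ModElem K n m) (F : Fin m → MvPolynomial (Fin n) K) :
    dotF (fun k => u k - w k) F = dotF u F - dotF w F := by
  rw [dotF, dotF, dotF, ← Finset.sum_sub_distrib]
  exact Finset.sum_congr rfl fun k _ => by ring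

theorem dotF_eVec (F : Fin m → MvPolynomial (Fin n) K) (i : Fin m) :
    dotF (eVec i : ModElem K n m) F = F i := by
  rw [dotF]
  rw [Finset.sum_eq_single i]
  · simp [eVec]
  · intro b _ hb; simp [eVec, hb]
  · intro h; exact absurd (Finset.mem_univ i) h

theorem dotF_termVec (F : Fin m → MvPolynomial (Fin n) K) (α : PP n) (c : K) (i : Fin m) :
    dotF (termVec α c i : ModElem K n m) F = MvPolynomial.monomial α c * F i := by
  rw [dotF]
  rw [Finset.sum_eq_single i]
  · simp [termVec]
  · intro b _ hb; simp [termVec, hb]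
  · intro h; exact absurd (Finset.mem_univ i) h

theorem lppMW_termVec (o2 : ModOrd n m) (α : PP n) {c : K} (hc : c ≠ 0) (i : Fin m) :
    lppMW o2 (termVec α c i : ModElem K n m) = (((α, i) : MTerm n m) : WithBot (MTerm n m)) := by
  apply lppMW_eq_of
  · rw [mem_msupport]
    show MvPolynomial.coeff α (termVec α c i i) ≠ 0
    simp [termVec, MvPolynomial.coeff_monomial, hc]
  · rintro ⟨β, k⟩ hb
    have h := mem_msupport.1 hb
    have h2 : MvPolynomial.coeff β (termVec α c i k) ≠ 0 := h
    rw [termVec] at h2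
    by_cases hk : k = i
    · subst hk
      rw [if_pos rfl, MvPolynomial.coeff_monomial] at h2
      by_cases hβ : α = β
      · subst hβ; exact @le_refl _ o2.ord.toPreorder _
      · rw [if_neg hβ] at h2; exact absurd rfl h2
    · rw [if_neg hk] at h2; simp at h2

theorem lppMW_eVec (o2 : ModOrd n m) (i : Fin m) :
    lppMW o2 (eVec i : ModElem K n m) = ((((0 : PP n), i) : MTerm n m) : WithBot (MTerm n m)) := by
  have h : (eVec i : ModElem K n m) = termVec 0 (1 : K) i := by
    funext k
    rw [eVec, termVec]
    by_cases hk : k = i <;> simp [hk, MvPolynomial.monomial_zero']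
  rw [h]
  exact lppMW_termVec o2 0 one_ne_zero i

/-- Module cancellation. -/
theorem lppMW_sub_cancel (o2 : ModOrd n m) {u w : ModElem K n m} {a : MTerm n m}
    (hu : lppMW o2 u = (a : WithBot (MTerm n m)))
    (hw : lppMW o2 w = (a : WithBot (MTerm n m))) :
    wbltM o2 (lppMW o2 (fun k => u k - MvPolynomial.C (mcoeff u a / mcoeff w a) * w k))
      (a : WithBot (MTerm n m)) := by
  set c := mcoeff u a / mcoeff w a with hc
  apply lppMW_lt_of
  rintro ⟨β, k⟩ hb
  have h := mem_msupport.1 hb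
  have h2' : MvPolynomial.coeff β (u k - MvPolynomial.C c * w k) ≠ 0 := h
  rw [MvPolynomial.coeff_sub, MvPolynomial.coeff_C_mul] at h2'
  have h2 : MvPolynomial.coeff β (u k) - c * MvPolynomial.coeff β (w k) ≠ 0 := h2'
  have hble : o2.ord.le (β, k) a := by
    rcases eq_or_ne (MvPolynomial.coeff β (u k)) 0 with h0 | h0
    · rw [h0, zero_sub, neg_ne_zero] at h2
      have h3 : MvPolynomial.coeff β (w k) ≠ 0 := by
        intro h4; rw [h4, mul_zero] at h2; exact h2 rfl
      exact le_lppMW_term o2 hw (mem_msupport.2 h3)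
    · exact le_lppMW_term o2 hu (mem_msupport.2 h0)
  have hbne : ((β, k) : MTerm n m) ≠ a := by
    rintro rfl
    have hwa := mcoeff_lppMW_ne_zero o2 hw
    have : c * mcoeff w (β, k) = mcoeff u (β, k) := by
      rw [hc, div_mul_eq_mul_div, mul_div_assoc, div_self hwa, mul_one]
    exact h2 (by rw [show MvPolynomial.coeff β (w k) = mcoeff w (β,k) from rfl,
      show MvPolynomial.coeff β (u k) = mcoeff u (β,k) from rfl, this, sub_self])
  exact @lt_of_le_of_ne _ o2.ord.toPartialOrder _ _ hble hbne

end Aux2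
section Aux3
variable {K : Type*} [Field K] {n m : ℕ}

/-! ### POT helpers -/

theorem pot_lt_of_pos_lt (o1 : MonOrd n) (o2 : ModOrd n m) (hpot : IsPOT o1 o2)
    {β γ : PP n} {j i : Fin m} (h : i < j) :
    o2.ord.lt ((β, j) : MTerm n m) ((γ, i) : MTerm n m) :=
  (hpot (β, j) (γ, i)).2 (Or.inl h)

theorem pot_pos_le_of_le (o1 : MonOrd n) (o2 : ModOrd n m) (hpot : IsPOT o1 o2)
    {β γ : PP n} {k j : Fin m} (h : o2.ord.le ((β, k) : MTerm n m) ((γ, j) : MTerm n m)) :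
    j ≤ k := by
  rcases @eq_or_lt_of_le _ o2.ord.toPartialOrder _ _ h with h1 | h1
  · have h2 : ((β, k) : MTerm n m) = (γ, j) := h1
    have h3 := congrArg Prod.snd h2
    simp only at h3
    omega
  · rcases (hpot _ _).1 h1 with h2 | h2
    · exact le_of_lt h2
    · exact le_of_eq h2.1.symm

theorem pot_zero_lt (o1 : MonOrd n) (o2 : ModOrd n m) (hpot : IsPOT o1 o2)
    {j i : Fin m} (h : o2.ord.lt (((0 : PP n), j) : MTerm n m) (((0 : PP n), i) : MTerm n m)) :
    i < j := by
  rcases (hpot _ _).1 h with h1 | h1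
  · exact h1
  · exact absurd h1.2 (@lt_irrefl _ o1.ord.toPreorder _)

theorem mtmul_coe_eq (o2 : ModOrd n m) {a b : MTerm n m} {t : PP n}
    (h : mtmul t a = b) : t + a.1 = b.1 ∧ a.2 = b.2 := by
  subst h; exact ⟨rfl, rfl⟩

/-! ### The Koszul syzygy -/

theorem koszul_syzygy (o1 : MonOrd n) (o2 : ModOrd n m) (hpot : IsPOT o1 o2)
    (F : Fin m → MvPolynomial (Fin n) K)
    {g : MvPolynomial (Fin n) K} {v : ModElem K n m} (hg : dotF v F = g) (hg0 : g ≠ 0)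
    {β' : PP n} {j' : Fin m} (hsig : lppMW o2 v = (((β', j') : MTerm n m) : WithBot (MTerm n m)))
    {i : Fin m} (hij : i < j') :
    dotF (fun k => (if k = i then g else 0) - F i * v k) F = 0 ∧
      lppMW o2 (fun k => (if k = i then g else 0) - F i * v k)
        = (((lpp o1 g, i) : MTerm n m) : WithBot (MTerm n m)) := by
  have hvk : ∀ k : Fin m, k ≤ i → v k = 0 := by
    intro k hk
    by_contra hc
    obtain ⟨β, hβ⟩ := MvPolynomial.support_nonempty.2 hc
    have hmem : ((β, k) : MTerm n m) ∈ msupport v :=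
      mem_msupport.2 (MvPolynomial.mem_support_iff.1 hβ)
    have := pot_pos_le_of_le o1 o2 hpot (le_lppMW_term o2 hsig hmem)
    omega
  constructor
  · have h1 : dotF (fun k => (if k = i then g else 0) : ModElem K n m) F = g * F i := by
      rw [dotF, Finset.sum_eq_single i]
      · rw [if_pos rfl]
      · intro b _ hb; rw [if_neg hb, zero_mul]
      · intro h; exact absurd (Finset.mem_univ i) h
    have h2 := dotF_sub (fun k => (if k = i then g else 0) : ModElem K n m)
      (fun k => F i * v k) F
    have h3 : dotF (fun k => F i * v k) F = F i * dotF v F := dotF_pmul (F i) v F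
    rw [h2, h1, h3, hg]
    ring
  · apply lppMW_eq_of
    · rw [mem_msupport]
      show MvPolynomial.coeff (lpp o1 g) ((if i = i then g else 0) - F i * v i) ≠ 0
      rw [if_pos rfl, hvk i (le_refl i), mul_zero, sub_zero]
      exact lc_ne_zero o1 hg0
    · rintro ⟨β, k⟩ hb
      have hcoeff : MvPolynomial.coeff β ((if k = i then g else 0) - F i * v k) ≠ 0 :=
        mem_msupport.1 hb
      by_cases hk : k = i
      · subst hk
        rw [if_pos rfl, hvk k (le_refl k), mul_zero, sub_zero] at hcoeff
        have h3 : o1.ord.le β (lpp o1 g) := le_lpp o1 (MvPolynomial.mem_support_iff.2 hcoeff)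
        rcases @eq_or_lt_of_le _ o1.ord.toPartialOrder _ _ h3 with h4 | h4
        · rw [h4]; exact @le_refl _ o2.ord.toPreorder _
        · exact @le_of_lt _ o2.ord.toPreorder _ _
            ((hpot _ _).2 (Or.inr ⟨rfl, h4⟩))
      · rw [if_neg hk, zero_sub, MvPolynomial.coeff_neg, neg_ne_zero] at hcoeff
        have hvk2 : v k ≠ 0 := by
          intro h0; rw [h0, mul_zero] at hcoeff; exact hcoeff (MvPolynomial.coeff_zero β)
        -- k > i since v k ≠ 0 forces j' ≤ k
        obtain ⟨γ, hγ⟩ := MvPolynomial.support_nonempty.2 hvk2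
        have hmem : ((γ, k) : MTerm n m) ∈ msupport v :=
          mem_msupport.2 (MvPolynomial.mem_support_iff.1 hγ)
        have hk2 : j' ≤ k := pot_pos_le_of_le o1 o2 hpot (le_lppMW_term o2 hsig hmem)
        have hik : i < k := lt_of_lt_of_le hij hk2
        exact @le_of_lt _ o2.ord.toPreorder _ _ (pot_lt_of_pos_lt o1 o2 hpot hik)

/-! ### Selection lemmas -/

theorem exists_minStd (o1 : MonOrd n) (o2 : ModOrd n m) (F : Fin m → MvPolynomial (Fin n) K)
    (S : MTerm n m) :
    ∃ u₀ : ModElem K n m, lppMW o2 u₀ = (S : WithBot (MTerm n m)) ∧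
      ∀ u' : ModElem K n m, lppMW o2 u' = (S : WithBot (MTerm n m)) →
        wbleP o1 (lppW o1 (dotF u₀ F)) (lppW o1 (dotF u' F)) := by
  set B : Set (WithBot (PP n)) :=
    {b | ∃ u : ModElem K n m, lppMW o2 u = (S : WithBot (MTerm n m)) ∧ lppW o1 (dotF u F) = b}
    with hB
  have hne : B.Nonempty := by
    refine ⟨lppW o1 (dotF (termVec S.1 (1:K) S.2) F), termVec S.1 1 S.2, ?_, rfl⟩
    rw [lppMW_termVec o2 S.1 one_ne_zero S.2]
  obtain ⟨b₀, hb₀B, hmin⟩ := (wbltP_wf o1).has_min B hne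
  obtain ⟨u₀, hu₀, hu₀b⟩ := hb₀B
  refine ⟨u₀, hu₀, fun u' hu' => ?_⟩
  rw [hu₀b]
  exact (not_wbltP o1).1 (hmin _ ⟨u', hu', rfl⟩)

theorem exists_later_max {X : Type*} {G : Set X} {later : X → X → Prop}
    (hsto : StrictTotalOn G later) {D : Set X} (hDG : D ⊆ G) (hfinD : D.Finite)
    (hne : D.Nonempty) : ∃ p ∈ D, ∀ r ∈ D, r ≠ p → later p r := by
  classical
  have key : ∀ s : Finset X, (∀ x ∈ s, x ∈ G) → s.Nonempty →
      ∃ p ∈ s, ∀ r ∈ s, r ≠ p → later p r := by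
    intro s
    induction s using Finset.induction_on with
    | empty => intro _ h; exact absurd h (by simp)
    | @insert a s ha ih =>
      intro hsub hne
      rcases s.eq_empty_or_nonempty with rfl | hs
      · exact ⟨a, Finset.mem_insert_self a _, by
          intro r hr hrne
          rcases Finset.mem_insert.1 hr with rfl | h
          · exact absurd rfl hrne
          · exact absurd h (Finset.notMem_empty r)⟩
      · obtain ⟨p, hp, hpmax⟩ := ih (fun x hx => hsub x (Finset.mem_insert_of_mem hx)) hs
        have haG : a ∈ G := hsub a (Finset.mem_insert_self a s)
        have hpG : p ∈ G := hsub p (Finset.mem_insert_of_mem hp)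
        have hap : a ≠ p := fun h => ha (h ▸ hp)
        rcases hsto.2.2 a haG p hpG hap with h1 | h1
        · refine ⟨a, Finset.mem_insert_self a s, ?_⟩
          intro r hr hrne
          rcases Finset.mem_insert.1 hr with rfl | h
          · exact absurd rfl hrne
          · rcases eq_or_ne r p with rfl | hrp
            · exact h1
            · exact hsto.2.1 a haG p hpG r (hsub r (Finset.mem_insert_of_mem h)) h1
                (hpmax r h hrp)
        · refine ⟨p, Finset.mem_insert_of_mem hp, ?_⟩
          intro r hr hrne
          rcases Finset.mem_insert.1 hr with rfl | h
          · exact h1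
          · exact hpmax r h hrne
  obtain ⟨p, hp, hmax⟩ := key hfinD.toFinset
    (fun x hx => hDG ((Set.Finite.mem_toFinset hfinD).1 hx))
    (by rwa [← Set.Finite.toFinset_nonempty hfinD] at hne)
  exact ⟨p, (Set.Finite.mem_toFinset hfinD).1 hp, fun r hr =>
    hmax r ((Set.Finite.mem_toFinset hfinD).2 hr)⟩

end Aux3
section Aux4
variable {K : Type*} [Field K] {n m : ℕ}

/-- The inductive predicate `P(S)`: every labeled polynomial of signature `S` with nonzero
polynomial part is top-reducible by `G` with signature bound `S`. -/
def PProp (o1 : MonOrd n) (o2 : ModOrd n m) (F : Fin m → MvPolynomial (Fin n) K)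
    (G : Set (MvPolynomial (Fin n) K × ModElem K n m)) (S : MTerm n m) : Prop :=
  ∀ u : ModElem K n m, lppMW o2 u = (S : WithBot (MTerm n m)) → dotF u F ≠ 0 →
    ∃ p ∈ G, p.1 ≠ 0 ∧ lpp o1 p.1 ≤ lpp o1 (dotF u F) ∧
      wbleM o2 (lppMW o2 (smulPP (lpp o1 (dotF u F) - lpp o1 p.1) p.2))
        (S : WithBot (MTerm n m))

/-- The set of elements of `G` whose signature divides `S`. -/
def DSet (o2 : ModOrd n m) (G : Set (MvPolynomial (Fin n) K × ModElem K n m))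
    (S : MTerm n m) : Set (MvPolynomial (Fin n) K × ModElem K n m) :=
  {r | r ∈ G ∧ ∃ γ : PP n, lppMW o2 r.2 = (((γ, S.2) : MTerm n m) : WithBot (MTerm n m)) ∧
    γ ≤ S.1}

/-- The inductive predicate `Q(S)`: if the standard form of `S` is nonzero, then the
canonical (latest) rewriter of `S` top-reduces it with signature exactly `S`. -/
def QProp (o1 : MonOrd n) (o2 : ModOrd n m) (F : Fin m → MvPolynomial (Fin n) K)
    (G : Set (MvPolynomial (Fin n) K × ModElem K n m))
    (later : (MvPolynomial (Fin n) K × ModElem K n m) →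
      (MvPolynomial (Fin n) K × ModElem K n m) → Prop) (S : MTerm n m) : Prop :=
  ∀ u₀ : ModElem K n m, lppMW o2 u₀ = (S : WithBot (MTerm n m)) →
    (∀ u' : ModElem K n m, lppMW o2 u' = (S : WithBot (MTerm n m)) →
      wbleP o1 (lppW o1 (dotF u₀ F)) (lppW o1 (dotF u' F))) →
    dotF u₀ F ≠ 0 →
    ∀ p ∈ DSet o2 G S, (∀ r ∈ DSet o2 G S, r ≠ p → later p r) →
      p.1 ≠ 0 ∧ lpp o1 p.1 ≤ lpp o1 (dotF u₀ F) ∧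
        lppMW o2 (smulPP (lpp o1 (dotF u₀ F) - lpp o1 p.1) p.2) = (S : WithBot (MTerm n m))

theorem lppW_C_mul (o1 : MonOrd n) {c : K} (hc : c ≠ 0) (h : MvPolynomial (Fin n) K) :
    lppW o1 (MvPolynomial.C c * h) = lppW o1 h := by
  by_cases h0 : h = 0
  · rw [h0, mul_zero]
  · rw [show (MvPolynomial.C c : MvPolynomial (Fin n) K) = MvPolynomial.monomial 0 c from rfl,
      lppW_monomial_mul o1 h0 0 hc, zero_add, lppW_eq_coe o1 h0]

theorem FeVec_mem_DSet (o2 : ModOrd n m) {G : Set (MvPolynomial (Fin n) K × ModElem K n m)}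
    {F : Fin m → MvPolynomial (Fin n) K} (hFmem : ∀ i : Fin m, (F i, eVec i) ∈ G)
    (S : MTerm n m) : ((F S.2, eVec S.2) : MvPolynomial (Fin n) K × ModElem K n m) ∈
      DSet o2 G S :=
  ⟨hFmem S.2, 0, lppMW_eVec o2 S.2, zero_le⟩

/-- The workhorse: subtracting a strictly-smaller-leading-power-product element of the
same signature and invoking `P` at the (strictly smaller) resulting signature. -/
theorem combine_reduce (o1 : MonOrd n) (o2 : ModOrd n m)
    {F : Fin m → MvPolynomial (Fin n) K}
    {G : Set (MvPolynomial (Fin n) K × ModElem K n m)}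
    (hlab : ∀ p ∈ G, p.1 = dotF p.2 F)
    {S0 : MTerm n m}
    (hP : ∀ S' : MTerm n m, o2.ord.lt S' S0 → PProp o1 o2 F G S')
    {w u' : ModElem K n m} {a : MTerm n m}
    (haS0 : o2.ord.le a S0)
    (hw : lppMW o2 w = (a : WithBot (MTerm n m)))
    (hu' : lppMW o2 u' = (a : WithBot (MTerm n m)))
    (hlt : wbltP o1 (lppW o1 (dotF u' F)) (lppW o1 (dotF w F))) :
    ∃ q ∈ G, q.1 ≠ 0 ∧ lpp o1 q.1 ≤ lpp o1 (dotF w F) ∧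
      ∃ W' : MTerm n m, o2.ord.lt W' a ∧
        lppMW o2 (smulPP (lpp o1 (dotF w F) - lpp o1 q.1) q.2) = (W' : WithBot (MTerm n m)) := by
  set c : K := mcoeff w a / mcoeff u' a with hc
  have hc0 : c ≠ 0 := div_ne_zero (mcoeff_lppMW_ne_zero o2 hw) (mcoeff_lppMW_ne_zero o2 hu')
  set v : ModElem K n m := fun k => w k - MvPolynomial.C c * u' k with hv
  have hdv : dotF v F = dotF w F - MvPolynomial.C c * dotF u' F := dotF_sub_C_mul w u' c F
  have hltv : wbltP o1 (lppW o1 (MvPolynomial.C c * dotF u' F)) (lppW o1 (dotF w F)) := by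
    rw [lppW_C_mul o1 hc0]; exact hlt
  have hlead : lppW o1 (dotF v F) = lppW o1 (dotF w F) := by
    rw [hdv]; exact lppW_sub_dominant o1 hltv
  have hw0 : dotF w F ≠ 0 := by
    intro h0
    rw [h0, (lppW_eq_bot_iff o1 0).2 rfl] at hlt
    exact (@WithBot.not_lt_bot (PP n) o1.ord.toLT _) hlt
  have hv0 : dotF v F ≠ 0 := by
    intro h0
    rw [h0, (lppW_eq_bot_iff o1 0).2 rfl] at hlead
    exact hw0 ((lppW_eq_bot_iff o1 _).1 hlead.symm)
  have hlppv : lpp o1 (dotF v F) = lpp o1 (dotF w F) := by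
    have h1 := lppW_eq_coe o1 hv0
    have h2 := lppW_eq_coe o1 hw0
    rw [h1, h2] at hlead
    exact WithBot.coe_inj.1 hlead
  have hsigv : wbltM o2 (lppMW o2 v) (a : WithBot (MTerm n m)) := lppMW_sub_cancel o2 hw hu'
  have hvne : v ≠ 0 := fun h0 => hv0 (by rw [h0, dotF_zero])
  obtain ⟨S₂, hS₂⟩ := lppMW_exists_coe o2 hvne
  have hS₂a : o2.ord.lt S₂ a := (wbltM_coe o2).1 (hS₂ ▸ hsigv)
  have hS₂S0 : o2.ord.lt S₂ S0 := @lt_of_lt_of_le _ o2.ord.toPreorder _ _ _ hS₂a haS0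
  obtain ⟨q, hqG, hq1, hqle, hqsig⟩ := hP S₂ hS₂S0 v hS₂ hv0
  have hq2 : q.2 ≠ 0 := by
    intro h0
    exact hq1 (by rw [hlab q hqG, h0, dotF_zero])
  have hs0 : smulPP (lpp o1 (dotF v F) - lpp o1 q.1) q.2 ≠ 0 := smulPP_ne_zero hq2
  obtain ⟨W', hW'⟩ := lppMW_exists_coe o2 hs0
  refine ⟨q, hqG, hq1, hlppv ▸ hqle, W', ?_, by rw [← hlppv]; exact hW'⟩
  have h3 : wbleM o2 (W' : WithBot (MTerm n m)) (S₂ : WithBot (MTerm n m)) := hW' ▸ hqsig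
  exact @lt_of_le_of_lt _ o2.ord.toPreorder _ _ _ ((wbleM_coe o2).1 h3) hS₂a

end Aux4
section Aux5
variable {K : Type*} [Field K] {n m : ℕ}

theorem Pstep (o1 : MonOrd n) (o2 : ModOrd n m)
    {F : Fin m → MvPolynomial (Fin n) K}
    {G : Set (MvPolynomial (Fin n) K × ModElem K n m)}
    {later : (MvPolynomial (Fin n) K × ModElem K n m) →
      (MvPolynomial (Fin n) K × ModElem K n m) → Prop}
    (hfin : G.Finite) (hlab : ∀ p ∈ G, p.1 = dotF p.2 F)
    (hsto : StrictTotalOn G later)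
    (hFmem : ∀ i : Fin m, (F i, eVec i) ∈ G)
    {S : MTerm n m}
    (hP : ∀ S' : MTerm n m, o2.ord.lt S' S → PProp o1 o2 F G S')
    (hQ : QProp o1 o2 F G later S) :
    PProp o1 o2 F G S := by
  intro u hu hf
  obtain ⟨u₀, hu₀, hmin⟩ := exists_minStd o1 o2 F S
  have hminW : wbleP o1 (lppW o1 (dotF u₀ F)) (lppW o1 (dotF u F)) := hmin u hu
  by_cases hcase : wbltP o1 (lppW o1 (dotF u₀ F)) (lppW o1 (dotF u F))
  · -- strict: combine and recurse
    obtain ⟨q, hqG, hq1, hqle, W', hW'S, hW'sig⟩ := combine_reduce o1 o2 hlab hP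
      (@le_refl _ o2.ord.toPreorder S) hu hu₀ hcase
    refine ⟨q, hqG, hq1, hqle, ?_⟩
    rw [hW'sig]
    exact (wbleM_coe o2).2 (@le_of_lt _ o2.ord.toPreorder _ _ hW'S)
  · -- equality of lppW: use Q
    have heq : lppW o1 (dotF u₀ F) = lppW o1 (dotF u F) := by
      have h1 := (not_wbltP o1).1 hcase
      exact @le_antisymm _ (@WithBot.instPartialOrder _ o1.ord.toPartialOrder) _ _ hminW h1
    have hf₀ : dotF u₀ F ≠ 0 := by
      intro h0
      rw [h0, (lppW_eq_bot_iff o1 0).2 rfl] at heq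
      exact hf ((lppW_eq_bot_iff o1 _).1 heq.symm)
    have hlppeq : lpp o1 (dotF u₀ F) = lpp o1 (dotF u F) := by
      rw [lppW_eq_coe o1 hf₀, lppW_eq_coe o1 hf] at heq
      exact WithBot.coe_inj.1 heq
    have hDne : (DSet o2 G S).Nonempty := ⟨_, FeVec_mem_DSet o2 hFmem S⟩
    obtain ⟨p, hpD, hpmax⟩ := exists_later_max hsto (fun r hr => hr.1)
      (hfin.subset fun r hr => hr.1) hDne
    obtain ⟨hp1, hple, hpsig⟩ := hQ u₀ hu₀ hmin hf₀ p hpD hpmax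
    refine ⟨p, hpD.1, hp1, hlppeq ▸ hple, ?_⟩
    rw [← hlppeq, hpsig]
    exact wbleM_refl o2 _

end Aux5
section Aux6
variable {K : Type*} [Field K] {n m : ℕ}

theorem Qstep (o1 : MonOrd n) (o2 : ModOrd n m) (hpot : IsPOT o1 o2)
    {F : Fin m → MvPolynomial (Fin n) K}
    {G : Set (MvPolynomial (Fin n) K × ModElem K n m)}
    {later : (MvPolynomial (Fin n) K × ModElem K n m) →
      (MvPolynomial (Fin n) K × ModElem K n m) → Prop}
    (hfin : G.Finite) (hlab : ∀ p ∈ G, p.1 = dotF p.2 F)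
    (hsto : StrictTotalOn G later)
    (hFmem : ∀ i : Fin m, (F i, eVec i) ∈ G)
    (hCP : ∀ p ∈ G, ∀ q ∈ G, IsCritPairL o1 o2 later p q →
      ((F5DivL o1 o2 G (tf o1 p.1 q.1) p ∨ F5DivL o1 o2 G (tf o1 q.1 p.1) q) ∨
       (F5RewL o2 later G (tf o1 p.1 q.1) p ∨ F5RewL o2 later G (tf o1 q.1 p.1) q)))
    {S : MTerm n m}
    (IH : ∀ S' : MTerm n m, o2.ord.lt S' S →
      PProp o1 o2 F G S' ∧ QProp o1 o2 F G later S') :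
    QProp o1 o2 F G later S := by
  intro u₀ hu₀ hmin hf₀ pstar hpD hpmax
  obtain ⟨hpG, γs, hsigp, hγs⟩ := hpD
  have hτγ : (S.1 - γs) + γs = S.1 := tsub_add_cancel_of_le hγs
  have hmt : mtmul (S.1 - γs) ((γs, S.2) : MTerm n m) = S := by
    show ((S.1 - γs) + γs, S.2) = S
    rw [hτγ]
  have hsigw : lppMW o2 (smulPP (S.1 - γs) pstar.2) = (S : WithBot (MTerm n m)) := by
    rw [lppMW_smulPP o2 (S.1 - γs) hsigp, hmt]
  have hp1ne : pstar.1 ≠ 0 := by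
    intro h0
    have hd0 : dotF (smulPP (S.1 - γs) pstar.2) F = 0 := by
      rw [dotF_smulPP, ← hlab pstar hpG, h0, mul_zero]
    have h1 := hmin _ hsigw
    rw [hd0, (lppW_eq_bot_iff o1 0).2 rfl] at h1
    exact hf₀ ((lppW_eq_bot_iff o1 _).1 ((wbleP_bot_iff o1).1 h1))
  have hdw : dotF (smulPP (S.1 - γs) pstar.2) F
      = MvPolynomial.monomial (S.1 - γs) (1:K) * pstar.1 := by
    rw [dotF_smulPP, ← hlab pstar hpG]
  have hleadw : lppW o1 (dotF (smulPP (S.1 - γs) pstar.2) F)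
      = (((S.1 - γs) + lpp o1 pstar.1 : PP n) : WithBot (PP n)) := by
    rw [hdw, lppW_monomial_mul o1 hp1ne (S.1 - γs) one_ne_zero]
  -- abbreviate μ
  generalize hμdef : (S.1 - γs) + lpp o1 pstar.1 = μ at hleadw
  have hμle : o1.ord.le (lpp o1 (dotF u₀ F)) μ := by
    have h1 := hmin _ hsigw
    rw [hleadw, lppW_eq_coe o1 hf₀] at h1
    exact (wbleP_coe o1).1 h1
  rcases @eq_or_lt_of_le _ o1.ord.toPartialOrder _ _ hμle with heq | hlt
  · -- Case B1 : lpp f₀ = μ, pstar itself reduces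
    refine ⟨hp1ne, ?_, ?_⟩
    · rw [heq, ← hμdef]; exact le_add_self
    · rw [heq, ← hμdef, add_tsub_cancel_right]
      exact hsigw
  · -- Case B2 : lpp f₀ ≺ μ : derive False
    exfalso
    have hpμ : lpp o1 pstar.1 ≤ μ := by rw [← hμdef]; exact le_add_self
    have hμp : μ - lpp o1 pstar.1 = S.1 - γs := by rw [← hμdef, add_tsub_cancel_right]
    -- the inner well-founded induction
    have inner : ∀ W : MTerm n m, o2.ord.lt W S →
        ∀ q, q ∈ G → q.1 ≠ 0 → lpp o1 q.1 ≤ μ →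
        lppMW o2 (smulPP (μ - lpp o1 q.1) q.2) = (W : WithBot (MTerm n m)) → False := by
      intro W0
      refine o2.wf.induction (C := fun W => o2.ord.lt W S →
        ∀ q, q ∈ G → q.1 ≠ 0 → lpp o1 q.1 ≤ μ →
        lppMW o2 (smulPP (μ - lpp o1 q.1) q.2) = (W : WithBot (MTerm n m)) → False) W0 ?_
      intro W IH2 hWS q hqG hq1 hqle hqsig
      have hq2 : q.2 ≠ 0 := fun h0 => hq1 (by rw [hlab q hqG, h0, dotF_zero])
      have hδμ : (μ - lpp o1 q.1) + lpp o1 q.1 = μ := tsub_add_cancel_of_le hqle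
      have hdq : dotF (smulPP (μ - lpp o1 q.1) q.2) F
          = MvPolynomial.monomial (μ - lpp o1 q.1) (1:K) * q.1 := by
        rw [dotF_smulPP, ← hlab q hqG]
      have hdqne : dotF (smulPP (μ - lpp o1 q.1) q.2) F ≠ 0 := by
        rw [hdq]; exact monomial_mul_ne_zero hq1 _ one_ne_zero
      have hleadq : lppW o1 (dotF (smulPP (μ - lpp o1 q.1) q.2) F) = (μ : WithBot (PP n)) := by
        rw [hdq, lppW_monomial_mul o1 hq1 _ one_ne_zero, hδμ]
      have hlppq : lpp o1 (dotF (smulPP (μ - lpp o1 q.1) q.2) F) = μ := by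
        have h1 := lppW_eq_coe o1 hdqne
        rw [hleadq] at h1
        exact (WithBot.coe_inj.1 h1).symm
      by_cases hsyz : ∃ u' : ModElem K n m,
          lppMW o2 u' = (W : WithBot (MTerm n m)) ∧ dotF u' F = 0
      · -- a syzygy of signature W exists: lower the signature
        obtain ⟨u', hu'W, hu'0⟩ := hsyz
        have hlt' : wbltP o1 (lppW o1 (dotF u' F))
            (lppW o1 (dotF (smulPP (μ - lpp o1 q.1) q.2) F)) := by
          rw [hu'0, (lppW_eq_bot_iff o1 0).2 rfl, hleadq]
          exact wbltP_bot o1 μ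
        obtain ⟨q', hq'G, hq'1, hq'le, W', hW'W, hW'sig⟩ :=
          combine_reduce o1 o2 hlab (fun S' h => (IH S' h).1)
            (@le_of_lt _ o2.ord.toPreorder _ _ hWS) hqsig hu'W hlt'
        rw [hlppq] at hq'le hW'sig
        exact IH2 W' hW'W (@lt_trans _ o2.ord.toPreorder _ _ _ hW'W hWS)
          q' hq'G hq'1 hq'le hW'sig
      · -- no syzygy of signature W
        obtain ⟨u₀', hu₀'W, hmin'⟩ := exists_minStd o1 o2 F W
        have hf₀' : dotF u₀' F ≠ 0 := fun h0 => hsyz ⟨u₀', hu₀'W, h0⟩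
        have hμ'le : o1.ord.le (lpp o1 (dotF u₀' F)) μ := by
          have h1 := hmin' _ hqsig
          rw [hleadq, lppW_eq_coe o1 hf₀'] at h1
          exact (wbleP_coe o1).1 h1
        rcases @eq_or_lt_of_le _ o1.ord.toPartialOrder _ _ hμ'le with heq' | hlt' 
        · -- the heavy case: standard form of W has lead exactly μ
          obtain ⟨cw, hcwD, hcwmax⟩ := exists_later_max hsto (fun r hr => hr.1)
            (hfin.subset fun r hr => hr.1) ⟨_, FeVec_mem_DSet o2 hFmem W⟩
          obtain ⟨hcw1, hcwle, hcwsig⟩ :=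
            (IH W hWS).2 u₀' hu₀'W hmin' hf₀' cw hcwD hcwmax
          rw [heq'] at hcwle hcwsig
          have hcwG := hcwD.1
          have hcw2 : cw.2 ≠ 0 := fun h0 => hcw1 (by rw [hlab cw hcwG, h0, dotF_zero])
          obtain ⟨⟨γw, jw⟩, haw⟩ := lppMW_exists_coe o2 hcw2
          have hτWμ : (μ - lpp o1 cw.1) + lpp o1 cw.1 = μ := tsub_add_cancel_of_le hcwle
          have hWaw : mtmul (μ - lpp o1 cw.1) ((γw, jw) : MTerm n m) = W := by
            have h1 := lppMW_smulPP o2 (μ - lpp o1 cw.1) haw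
            rw [hcwsig] at h1
            exact (WithBot.coe_inj.1 h1).symm
          have hjw : jw = W.2 := congrArg Prod.snd hWaw
          have hγw : (μ - lpp o1 cw.1) + γw = W.1 := congrArg Prod.fst hWaw
          -- the critical pair (pstar, cw)
          have hLμ : lpp o1 pstar.1 ⊔ lpp o1 cw.1 ≤ μ := sup_le hpμ hcwle
          have hstp : (μ - (lpp o1 pstar.1 ⊔ lpp o1 cw.1)) + tf o1 pstar.1 cw.1
              = μ - lpp o1 pstar.1 := by
            rw [tf]
            exact tsub_add_tsub_cancel hLμ le_sup_left
          have hstq : (μ - (lpp o1 pstar.1 ⊔ lpp o1 cw.1)) + tf o1 cw.1 pstar.1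
              = μ - lpp o1 cw.1 := by
            rw [tf, sup_comm (lpp o1 cw.1) (lpp o1 pstar.1)]
            exact tsub_add_tsub_cancel hLμ le_sup_right
          have hsigtp : lppMW o2 (smulPP (tf o1 pstar.1 cw.1) pstar.2)
              = ((mtmul (tf o1 pstar.1 cw.1) ((γs, S.2) : MTerm n m)) : WithBot (MTerm n m)) :=
            lppMW_smulPP o2 _ hsigp
          have hsigtq : lppMW o2 (smulPP (tf o1 cw.1 pstar.1) cw.2)
              = ((mtmul (tf o1 cw.1 pstar.1) ((γw, jw) : MTerm n m)) : WithBot (MTerm n m)) :=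
            lppMW_smulPP o2 _ haw
          have hlt2 : o2.ord.lt (mtmul (tf o1 cw.1 pstar.1) ((γw, jw) : MTerm n m))
              (mtmul (tf o1 pstar.1 cw.1) ((γs, S.2) : MTerm n m)) := by
            apply mtmul_lt_cancel o2 (t := μ - (lpp o1 pstar.1 ⊔ lpp o1 cw.1))
            rw [mtmul_mtmul, mtmul_mtmul, hstq, hstp, hμp, hWaw, hmt]
            exact hWS
          have hcrit : IsCritPairL o1 o2 later pstar cw := by
            refine ⟨hp1ne, hcw1, Or.inl ?_⟩
            rw [hsigtp, hsigtq]
            exact (wbltM_coe o2).2 hlt2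
          -- bound for the rewriting positions
          have htpτ : tf o1 pstar.1 cw.1 + γs ≤ S.1 := by
            have h1 : tf o1 pstar.1 cw.1 ≤ μ - lpp o1 pstar.1 := by
              rw [← hstp]; exact le_add_self
            rw [hμp] at h1
            calc tf o1 pstar.1 cw.1 + γs ≤ (S.1 - γs) + γs := add_le_add_left h1 γs
            _ = S.1 := hτγ
          have htqW : tf o1 cw.1 pstar.1 + γw ≤ W.1 := by
            have h1 : tf o1 cw.1 pstar.1 ≤ μ - lpp o1 cw.1 := by
              rw [← hstq]; exact le_add_self
            calc tf o1 cw.1 pstar.1 + γw ≤ (μ - lpp o1 cw.1) + γw := add_le_add_left h1 γw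
            _ = W.1 := hγw
          rcases hCP pstar hpG cw hcwG hcrit with (hdiv | hdiv) | (hrew | hrew)
          · -- (a) F5-divisible at pstar : Koszul syzygy of signature S, contradiction
            obtain ⟨αd, id, hd, r, hrG, hr1, βd, jd, hrsig, hrlpp, hlt0⟩ := hdiv
            rw [hsigp] at hd
            have hpair : ((γs, S.2) : MTerm n m) = (αd, id) := WithBot.coe_inj.1 hd
            have hα : γs = αd := congrArg Prod.fst hpair
            have hi : S.2 = id := congrArg Prod.snd hpair
            rw [← hα] at hrlpp
            rw [← hi] at hlt0
            have hij : S.2 < jd := pot_zero_lt o1 o2 hpot hlt0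
            obtain ⟨hz0, hzsig⟩ := koszul_syzygy o1 o2 hpot F (hlab r hrG).symm hr1 hrsig hij
            have hrS1 : lpp o1 r.1 ≤ S.1 := le_trans hrlpp htpτ
            have hz'sig : lppMW o2 (smulPP (S.1 - lpp o1 r.1)
                (fun k => (if k = S.2 then r.1 else 0) - F S.2 * r.2 k))
                = (S : WithBot (MTerm n m)) := by
              rw [lppMW_smulPP o2 _ hzsig]
              show ((((S.1 - lpp o1 r.1) + lpp o1 r.1, S.2) : MTerm n m) : WithBot (MTerm n m)) = _
              rw [tsub_add_cancel_of_le hrS1]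
            have hz'0 : dotF (smulPP (S.1 - lpp o1 r.1)
                (fun k => (if k = S.2 then r.1 else 0) - F S.2 * r.2 k)) F = 0 := by
              rw [dotF_smulPP, hz0, mul_zero]
            have h1 := hmin _ hz'sig
            rw [hz'0, (lppW_eq_bot_iff o1 0).2 rfl] at h1
            exact hf₀ ((lppW_eq_bot_iff o1 _).1 ((wbleP_bot_iff o1).1 h1))
          · -- (b) F5-divisible at cw : Koszul syzygy of signature W, contradiction
            obtain ⟨αd, id, hd, r, hrG, hr1, βd, jd, hrsig, hrlpp, hlt0⟩ := hdiv
            rw [haw] at hd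
            have hpair : ((γw, jw) : MTerm n m) = (αd, id) := WithBot.coe_inj.1 hd
            have hα : γw = αd := congrArg Prod.fst hpair
            have hi : jw = id := congrArg Prod.snd hpair
            rw [← hα] at hrlpp
            rw [← hi] at hlt0
            have hij : jw < jd := pot_zero_lt o1 o2 hpot hlt0
            rw [hjw] at hij
            obtain ⟨hz0, hzsig⟩ := koszul_syzygy o1 o2 hpot F (hlab r hrG).symm hr1 hrsig hij
            have hrW1 : lpp o1 r.1 ≤ W.1 := le_trans hrlpp htqW
            refine hsyz ⟨smulPP (W.1 - lpp o1 r.1)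
              (fun k => (if k = W.2 then r.1 else 0) - F W.2 * r.2 k), ?_, ?_⟩
            · rw [lppMW_smulPP o2 _ hzsig]
              show ((((W.1 - lpp o1 r.1) + lpp o1 r.1, W.2) : MTerm n m) : WithBot (MTerm n m)) = _
              rw [tsub_add_cancel_of_le hrW1]
            · rw [dotF_smulPP, hz0, mul_zero]
          · -- (c) F5-rewritable at pstar : contradicts maximality of pstar in DSet S
            obtain ⟨r, hrG, ⟨a, b, hra, hb, hab2, hab1⟩, hlater⟩ := hrew
            rw [hsigtp] at hb
            have hbval : b = mtmul (tf o1 pstar.1 cw.1) ((γs, S.2) : MTerm n m) :=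
              (WithBot.coe_inj.1 hb).symm
            have hb2 : b.2 = S.2 := by rw [hbval]; rfl
            have hb1 : b.1 = tf o1 pstar.1 cw.1 + γs := by rw [hbval]; rfl
            have hrD : r ∈ DSet o2 G S := by
              refine ⟨hrG, a.1, ?_, ?_⟩
              · rw [hra]
                exact congrArg _ (Prod.ext rfl (hab2.trans hb2))
              · exact le_trans hab1 (hb1 ▸ htpτ)
            have hrne : r ≠ pstar := by
              rintro rfl
              exact hsto.1 r hrG hlater
            exact hsto.1 pstar hpG
              (hsto.2.1 pstar hpG r hrG pstar hpG (hpmax r hrD hrne) hlater)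
          · -- (d) F5-rewritable at cw : contradicts maximality of cw in DSet W
            obtain ⟨r, hrG, ⟨a, b, hra, hb, hab2, hab1⟩, hlater⟩ := hrew
            rw [hsigtq] at hb
            have hbval : b = mtmul (tf o1 cw.1 pstar.1) ((γw, jw) : MTerm n m) :=
              (WithBot.coe_inj.1 hb).symm
            have hb2 : b.2 = W.2 := by rw [hbval, ← hjw]; rfl
            have hb1 : b.1 = tf o1 cw.1 pstar.1 + γw := by rw [hbval]; rfl
            have hrD : r ∈ DSet o2 G W := by
              refine ⟨hrG, a.1, ?_, ?_⟩
              · rw [hra]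
                exact congrArg _ (Prod.ext rfl (hab2.trans hb2))
              · exact le_trans hab1 (hb1 ▸ htqW)
            have hrne : r ≠ cw := by
              rintro rfl
              exact hsto.1 r hrG hlater
            exact hsto.1 cw hcwG
              (hsto.2.1 cw hcwG r hrG cw hcwG (hcwmax r hrD hrne) hlater)
        · -- strict: combine with the standard form of W
          have hltc : wbltP o1 (lppW o1 (dotF u₀' F))
              (lppW o1 (dotF (smulPP (μ - lpp o1 q.1) q.2) F)) := by
            rw [hleadq, lppW_eq_coe o1 hf₀']
            exact (wbltP_coe o1).2 hlt'
          obtain ⟨q', hq'G, hq'1, hq'le, W', hW'W, hW'sig⟩ :=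
            combine_reduce o1 o2 hlab (fun S' h => (IH S' h).1)
              (@le_of_lt _ o2.ord.toPreorder _ _ hWS) hqsig hu₀'W hltc
          rw [hlppq] at hq'le hW'sig
          exact IH2 W' hW'W (@lt_trans _ o2.ord.toPreorder _ _ _ hW'W hWS)
            q' hq'G hq'1 hq'le hW'sig
    -- entry into the inner induction
    have hltc : wbltP o1 (lppW o1 (dotF u₀ F))
        (lppW o1 (dotF (smulPP (S.1 - γs) pstar.2) F)) := by
      rw [hleadw, lppW_eq_coe o1 hf₀]
      exact (wbltP_coe o1).2 hlt
    obtain ⟨q, hqG, hq1, hqle, W₀, hW₀S, hW₀sig⟩ :=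
      combine_reduce o1 o2 hlab (fun S' h => (IH S' h).1)
        (@le_refl _ o2.ord.toPreorder S) hsigw hu₀ hltc
    have hlppw : lpp o1 (dotF (smulPP (S.1 - γs) pstar.2) F) = μ := by
      have hwne : dotF (smulPP (S.1 - γs) pstar.2) F ≠ 0 := by
        rw [hdw]; exact monomial_mul_ne_zero hp1ne _ one_ne_zero
      have h1 := lppW_eq_coe o1 hwne
      rw [hleadw] at h1
      exact (WithBot.coe_inj.1 h1).symm
    rw [hlppw] at hqle hW₀sig
    exact inner W₀ hW₀S q hqG hq1 hqle hW₀sig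

end Aux6
section Aux7
variable {K : Type*} [Field K] {n m : ℕ}

theorem mainKey (o1 : MonOrd n) (o2 : ModOrd n m) (hpot : IsPOT o1 o2)
    {F : Fin m → MvPolynomial (Fin n) K}
    {G : Set (MvPolynomial (Fin n) K × ModElem K n m)}
    {later : (MvPolynomial (Fin n) K × ModElem K n m) →
      (MvPolynomial (Fin n) K × ModElem K n m) → Prop}
    (hfin : G.Finite) (hlab : ∀ p ∈ G, p.1 = dotF p.2 F)
    (hsto : StrictTotalOn G later)
    (hFmem : ∀ i : Fin m, (F i, eVec i) ∈ G)
    (hCP : ∀ p ∈ G, ∀ q ∈ G, IsCritPairL o1 o2 later p q →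
      ((F5DivL o1 o2 G (tf o1 p.1 q.1) p ∨ F5DivL o1 o2 G (tf o1 q.1 p.1) q) ∨
       (F5RewL o2 later G (tf o1 p.1 q.1) p ∨ F5RewL o2 later G (tf o1 q.1 p.1) q))) :
    ∀ S : MTerm n m, PProp o1 o2 F G S ∧ QProp o1 o2 F G later S := by
  intro S
  refine o2.wf.induction
    (C := fun S => PProp o1 o2 F G S ∧ QProp o1 o2 F G later S) S ?_
  intro S IH
  have hQ : QProp o1 o2 F G later S :=
    Qstep o1 o2 hpot hfin hlab hsto hFmem hCP IH
  exact ⟨Pstep o1 o2 hfin hlab hsto hFmem (fun S' h => (IH S' h).1) hQ, hQ⟩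

end Aux7
/-- Let `≺₂` be the position-over-term extension of `≺₁`, and `G` a finite
set of labeled polynomials of `I` with a strict total order `later`. If (1) each `fᵢ^[eᵢ]`
belongs to `G` and every other element of `G` was added later than each `fᵢ^[eᵢ]`, and
(2) every critical pair of `G` is F5-divisible or F5-rewritable by `G`, then `G` is a
full-labeled Gröbner basis for `I`. -/
theorem detachability_stmt10 {K : Type*} [Field K] {n m : ℕ}
    (o1 : MonOrd n) (o2 : ModOrd n m) (hpot : IsPOT o1 o2)
    (F : Fin m → MvPolynomial (Fin n) K)
    (G : Set (MvPolynomial (Fin n) K × ModElem K n m)) (hfin : G.Finite)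
    (hlab : ∀ p ∈ G, p.1 = dotF p.2 F)
    (later : (MvPolynomial (Fin n) K × ModElem K n m) →
      (MvPolynomial (Fin n) K × ModElem K n m) → Prop)
    (hsto : StrictTotalOn G later)
    (hFmem : ∀ i : Fin m, (F i, eVec i) ∈ G)
    (hFfirst : ∀ p ∈ G, (∀ i : Fin m, p ≠ (F i, eVec i)) →
      ∀ i : Fin m, later p (F i, eVec i))
    (hCP : ∀ p ∈ G, ∀ q ∈ G, IsCritPairL o1 o2 later p q →
      ((F5DivL o1 o2 G (tf o1 p.1 q.1) p ∨ F5DivL o1 o2 G (tf o1 q.1 p.1) q) ∨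
       (F5RewL o2 later G (tf o1 p.1 q.1) p ∨ F5RewL o2 later G (tf o1 q.1 p.1) q))) :
    IsFullLGBSet o1 o2 F G := by
  refine ⟨hlab, ?_⟩
  intro f u huf hf
  have hu0 : u ≠ 0 := by
    rintro rfl
    exact hf (by rw [huf, dotF_zero])
  obtain ⟨T, hT⟩ := lppMW_exists_coe o2 hu0
  have hfd : dotF u F ≠ 0 := by rw [← huf]; exact hf
  obtain ⟨p, hpG, hp1, hple, hpsig⟩ :=
    (mainKey o1 o2 hpot hfin hlab hsto hFmem hCP T).1 u hT hfd
  refine ⟨p, hpG, hp1, ?_, ?_⟩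
  · rw [huf]; exact hple
  · rw [huf, hT]; exact hpsig
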